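/- arXiv:1502.05254 — 3 statements merged into one kernel-verified Lean document; each statement's English description precedes it below -/
import Mathlib

section
/- C¹ functions with values in a uniformly open nc set form a uniformly open nc set. Let 𝒳 be a real operator space, Γ ⊆ 𝒳_nc a uniformly open nc set, s ∈ ℕ, and [a, b] ⊂ ℝ a compact interval. For r ∈ ℕ, let Y_* : [a, b] → 𝒳^{sr×sr} be a continuously differentiable function with Y_*(t) ∈ Γ_{sr} for all t ∈ [a, b]. Then there exists μ > 0 such that for every m ∈ ℕ and every continuously differentiable function Y : [a, b] → 𝒳^{srm×srm} with max{ sup_{t∈[a,b]} ‖Y(t) − Y_*^{(m)}(t)‖_{srm}, sup_{t∈[a,b]} ‖Ẏ(t) − Ẏ_*^{(m)}(t)‖_{srm} } < μ, one has Y(t) ∈ Γ_{srm} for all t ∈ [a, b]. Consequently, the set of all continuously differentiable functions (over all levels m) with values in Γ is a uniformly open nc set in C¹([a, b], 𝒳^{s×s})_nc with the level-m norms ‖Y‖ = max{sup_t ‖Y(t)‖, sup_t ‖Ẏ(t)‖}. -/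
/-! ## Core definitions for free nc functions over operator spaces.

Level-`n` elements of the nc space over `V` are `n×n` matrices over `V`. -/

/-- The `(2,2)` operator norm of a scalar matrix. -/
noncomputable def scalarOpNorm {𝕜 : Type*} [RCLike 𝕜] {n : ℕ}
    (S : Matrix (Fin n) (Fin n) 𝕜) : ℝ :=
  ‖Matrix.toEuclideanCLM (𝕜 := 𝕜) S‖

/-- The direct sum `X ⊕ Y` of square matrices. -/
def dirSumM {V : Type*} [Zero V] {n m : ℕ} (X : Matrix (Fin n) (Fin n) V)
    (Y : Matrix (Fin m) (Fin m) V) : Matrix (Fin (n + m)) (Fin (n + m)) V :=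
  Matrix.reindex finSumFinEquiv finSumFinEquiv (Matrix.fromBlocks X 0 0 Y)

/-- The `m`-fold block-diagonal amplification `Y^{(m)} = I_m ⊗ Y` of `Y ∈ V^{s×s}`. -/
def amplify {V : Type*} [Zero V] {s : ℕ} (m : ℕ) (Y : Matrix (Fin s) (Fin s) V) :
    Matrix (Fin (s * m)) (Fin (s * m)) V :=
  Matrix.of fun i j =>
    if (finProdFinEquiv.symm i).2 = (finProdFinEquiv.symm j).2 then
      Y (finProdFinEquiv.symm i).1 (finProdFinEquiv.symm j).1
    else 0

/-- Left multiplication of a matrix over `V` by a scalar matrix. -/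
def smulLs (𝕜 : Type*) [Semiring 𝕜] {V : Type*} [AddCommMonoid V] [Module 𝕜 V]
    {p n q : ℕ} (S : Matrix (Fin p) (Fin n) 𝕜) (X : Matrix (Fin n) (Fin q) V) :
    Matrix (Fin p) (Fin q) V :=
  Matrix.of fun i j => ∑ k, S i k • X k j

/-- Right multiplication of a matrix over `V` by a scalar matrix. -/
def smulRs (𝕜 : Type*) [Semiring 𝕜] {V : Type*} [AddCommMonoid V] [Module 𝕜 V]
    {p n q : ℕ} (X : Matrix (Fin p) (Fin n) V) (T : Matrix (Fin n) (Fin q) 𝕜) :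
    Matrix (Fin p) (Fin q) V :=
  Matrix.of fun i j => ∑ k, T k j • X i k

/-- An operator space structure on `V`: a complete norm on each matrix level,
satisfying Ruan's axioms. -/
structure OperatorSpace (𝕜 : Type*) (V : Type*) [RCLike 𝕜] [AddCommGroup V]
    [Module 𝕜 V] where
  N : ∀ n : ℕ, Matrix (Fin n) (Fin n) V → ℝ
  norm_nonneg : ∀ n X, 0 ≤ N n X
  norm_eq_zero : ∀ n X, N n X = 0 ↔ X = 0
  norm_add_le : ∀ n X Y, N n (X + Y) ≤ N n X + N n Y
  norm_smul : ∀ n (c : 𝕜) X, N n (c • X) = ‖c‖ * N n X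
  complete : ∀ n (u : ℕ → Matrix (Fin n) (Fin n) V),
    (∀ ε : ℝ, 0 < ε → ∃ K, ∀ p ≥ K, ∀ q ≥ K, N n (u p - u q) < ε) →
    ∃ L, ∀ ε : ℝ, 0 < ε → ∃ K, ∀ p ≥ K, N n (u p - L) < ε
  norm_dirSum : ∀ (n m : ℕ) (X : Matrix (Fin n) (Fin n) V) (Y : Matrix (Fin m) (Fin m) V),
    N (n + m) (dirSumM X Y) = max (N n X) (N m Y)
  norm_smulLR : ∀ (n : ℕ) (S : Matrix (Fin n) (Fin n) 𝕜) (X : Matrix (Fin n) (Fin n) V)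
    (T : Matrix (Fin n) (Fin n) 𝕜),
    N n (smulLs 𝕜 S (smulRs 𝕜 X T)) ≤ scalarOpNorm S * N n X * scalarOpNorm T

/-- The entrywise (on `n×n` blocks) amplification `A^{(m)}` of a map on level `n`. -/
def blockAmp {V W : Type*} {n : ℕ}
    (A : Matrix (Fin n) (Fin n) V → Matrix (Fin n) (Fin n) W) (m : ℕ)
    (Z : Matrix (Fin (n * m)) (Fin (n * m)) V) :
    Matrix (Fin (n * m)) (Fin (n * m)) W :=
  Matrix.of fun i j =>
    A (Matrix.of fun a b => Z (finProdFinEquiv (a, (finProdFinEquiv.symm i).2))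
        (finProdFinEquiv (b, (finProdFinEquiv.symm j).2)))
      (finProdFinEquiv.symm i).1 (finProdFinEquiv.symm j).1

/-- `A` is completely bounded (w.r.t. operator space structures on source and target). -/
def CompletelyBounded {𝕜 V W : Type*} [RCLike 𝕜] [AddCommGroup V] [Module 𝕜 V]
    [AddCommGroup W] [Module 𝕜 W] (osV : OperatorSpace 𝕜 V) (osW : OperatorSpace 𝕜 W)
    {n : ℕ} (A : Matrix (Fin n) (Fin n) V → Matrix (Fin n) (Fin n) W) : Prop :=
  ∃ C : ℝ, ∀ (m : ℕ) (Z : Matrix (Fin (n * m)) (Fin (n * m)) V),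
    osW.N (n * m) (blockAmp A m Z) ≤ C * osV.N (n * m) Z

/-- `D` is the G-derivative of `F` at `X` (w.r.t. the operator space norm on the target). -/
def IsGDerivAt {𝕜 V W : Type*} [RCLike 𝕜] [AddCommGroup V] [Module 𝕜 V]
    [AddCommGroup W] [Module 𝕜 W] (osW : OperatorSpace 𝕜 W) {n : ℕ}
    (F : Matrix (Fin n) (Fin n) V → Matrix (Fin n) (Fin n) W)
    (X : Matrix (Fin n) (Fin n) V)
    (D : Matrix (Fin n) (Fin n) V → Matrix (Fin n) (Fin n) W) : Prop :=
  ∀ Z, ∀ ε : ℝ, 0 < ε → ∃ δ : ℝ, 0 < δ ∧ ∀ t : 𝕜, t ≠ 0 → ‖t‖ < δ →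
    osW.N n (t⁻¹ • (F (X + t • Z) - F X) - D Z) < ε

section SingleNC

variable {𝕜 : Type*} [RCLike 𝕜] {V W : Type*} [AddCommGroup V] [Module 𝕜 V]
  [AddCommGroup W] [Module 𝕜 W]

/-- A nc set: closed under direct sums. -/
def IsNCSet (Ω : ∀ n : ℕ, Set (Matrix (Fin n) (Fin n) V)) : Prop :=
  ∀ (n m : ℕ) (X : Matrix (Fin n) (Fin n) V) (Y : Matrix (Fin m) (Fin m) V),
    X ∈ Ω n → Y ∈ Ω m → dirSumM X Y ∈ Ω (n + m)

/-- A uniformly open set: around each of its points, it contains an nc ball. -/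
def UniformlyOpenNC (os : OperatorSpace 𝕜 V) (Ω : ∀ n : ℕ, Set (Matrix (Fin n) (Fin n) V)) :
    Prop :=
  ∀ (n : ℕ) (X : Matrix (Fin n) (Fin n) V), X ∈ Ω n → ∃ r : ℝ, 0 < r ∧
    ∀ (m : ℕ) (Z : Matrix (Fin (n * m)) (Fin (n * m)) V),
      os.N (n * m) (Z - amplify m X) < r → Z ∈ Ω (n * m)

/-- A nc function on `Ω`: it respects intertwinings by scalar matrices. -/
def IsNCFunction (𝕜 : Type*) [RCLike 𝕜] {V W : Type*} [AddCommGroup V] [Module 𝕜 V]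
    [AddCommGroup W] [Module 𝕜 W] (Ω : ∀ n : ℕ, Set (Matrix (Fin n) (Fin n) V))
    (f : ∀ n : ℕ, Matrix (Fin n) (Fin n) V → Matrix (Fin n) (Fin n) W) : Prop :=
  ∀ (n m : ℕ) (X : Matrix (Fin n) (Fin n) V) (Y : Matrix (Fin m) (Fin m) V)
    (T : Matrix (Fin n) (Fin m) 𝕜), X ∈ Ω n → Y ∈ Ω m →
    smulRs 𝕜 X T = smulLs 𝕜 T Y → smulRs 𝕜 (f n X) T = smulLs 𝕜 T (f m Y)

/-- `f` is uniformly locally bounded on `Ω`. -/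
def UnifLocBounded (osV : OperatorSpace 𝕜 V) (osW : OperatorSpace 𝕜 W)
    (Ω : ∀ n : ℕ, Set (Matrix (Fin n) (Fin n) V))
    (f : ∀ n : ℕ, Matrix (Fin n) (Fin n) V → Matrix (Fin n) (Fin n) W) : Prop :=
  ∀ (n : ℕ) (X : Matrix (Fin n) (Fin n) V), X ∈ Ω n → ∃ r : ℝ, 0 < r ∧ ∃ Mb : ℝ,
    ∀ (m : ℕ) (Z : Matrix (Fin (n * m)) (Fin (n * m)) V),
      osV.N (n * m) (Z - amplify m X) < r →
      Z ∈ Ω (n * m) ∧ osW.N (n * m) (f (n * m) Z) ≤ Mb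

/-- `f` is G-differentiable on `Ω`. -/
def GDifferentiableOn (osW : OperatorSpace 𝕜 W)
    (Ω : ∀ n : ℕ, Set (Matrix (Fin n) (Fin n) V))
    (f : ∀ n : ℕ, Matrix (Fin n) (Fin n) V → Matrix (Fin n) (Fin n) W) : Prop :=
  ∀ (n : ℕ) (X : Matrix (Fin n) (Fin n) V), X ∈ Ω n →
    ∃ D, IsGDerivAt osW (f n) X D

/-- `f` is continuous on `Ω` with respect to the uniformly-open topologies. -/
def NCContinuousOn (osV : OperatorSpace 𝕜 V) (osW : OperatorSpace 𝕜 W)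
    (Ω : ∀ n : ℕ, Set (Matrix (Fin n) (Fin n) V))
    (f : ∀ n : ℕ, Matrix (Fin n) (Fin n) V → Matrix (Fin n) (Fin n) W) : Prop :=
  ∀ (n : ℕ) (X : Matrix (Fin n) (Fin n) V), X ∈ Ω n → ∀ ε : ℝ, 0 < ε → ∃ δ : ℝ, 0 < δ ∧
    ∀ (m : ℕ) (Z : Matrix (Fin (n * m)) (Fin (n * m)) V), Z ∈ Ω (n * m) →
      osV.N (n * m) (Z - amplify m X) < δ →
      osW.N (n * m) (f (n * m) Z - amplify m (f n X)) < ε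

end SingleNC

/-- `Y` is continuously differentiable on `[a, b]` with derivative `Yd`, with respect to
the (level-`n`) operator space norm. -/
def IsC1MatOn {V : Type*} [AddCommGroup V] [Module ℝ V]
    (os : OperatorSpace ℝ V) {n : ℕ} (a b : ℝ)
    (Y Yd : ℝ → Matrix (Fin n) (Fin n) V) : Prop :=
  (∀ t ∈ Set.Icc a b, ∀ ε : ℝ, 0 < ε → ∃ η : ℝ, 0 < η ∧ ∀ t' ∈ Set.Icc a b,
    |t' - t| < η → os.N n (Y t' - Y t - ((t' - t) : ℝ) • Yd t) ≤ ε * |t' - t|) ∧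
  (∀ t ∈ Set.Icc a b, ∀ ε : ℝ, 0 < ε → ∃ η : ℝ, 0 < η ∧ ∀ t' ∈ Set.Icc a b,
    |t' - t| < η → os.N n (Yd t' - Yd t) < ε)

/-!
Uniform openness gives each `Y_*(t)` an nc ball of some radius `ρ` inside `Γ`. Amplification
does not increase norms (it is a direct sum of copies, conjugated by a permutation), so by the
triangle inequality the nc ball of radius `ρ / 2` around `Y_*(t')` still lies in `Γ` as long as
`‖Y_*(t') - Y_*(t)‖ < ρ / 2`, which holds for `t'` near `t` because `Y_*` is differentiable.
Compactness of `[a, b]` makes the radius uniform in `t`; any `μ` below it works.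
-/

open Filter Topology

@[simp]
theorem amplify_finProdFinEquiv {V : Type*} [Zero V] {n m : ℕ} (X : Matrix (Fin n) (Fin n) V)
    (a b : Fin n) (k l : Fin m) :
    amplify m X (finProdFinEquiv (a, k)) (finProdFinEquiv (b, l)) =
      if k = l then X a b else 0 := by
  simp only [amplify, Matrix.of_apply, Equiv.symm_apply_apply]

theorem amplify_zero {V : Type*} [Zero V] {n : ℕ} (X : Matrix (Fin n) (Fin n) V) :
    amplify 0 X = 0 :=
  Matrix.ext fun i => Fin.elim0 (finCongr (mul_zero n) i)

theorem amplify_sub {V : Type*} [AddGroup V] {n : ℕ} (m : ℕ) (X Y : Matrix (Fin n) (Fin n) V) :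
    amplify m (X - Y) = amplify m X - amplify m Y := by
  ext i j
  simp only [amplify, Matrix.of_apply, Matrix.sub_apply]
  split_ifs <;> simp

def amplifySuccEquiv (n m : ℕ) : Fin (n * (m + 1)) ≃ Fin (n * m + n) :=
  finProdFinEquiv.symm.trans <|
  (Equiv.prodCongr (Equiv.refl (Fin n)) finSumFinEquiv.symm).trans <|
  (Equiv.prodSumDistrib (Fin n) (Fin m) (Fin 1)).trans <|
  (Equiv.sumCongr finProdFinEquiv (finProdFinEquiv.trans (finCongr (mul_one n)))).trans
  finSumFinEquiv

theorem amplify_succ {V : Type*} [Zero V] {n m : ℕ} (X : Matrix (Fin n) (Fin n) V) :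
    amplify (m + 1) X =
      (dirSumM (amplify m X) X).submatrix (amplifySuccEquiv n m) (amplifySuccEquiv n m) := by
  have hcast (a : Fin n) (k : Fin 1) : Fin.cast (mul_one n) (finProdFinEquiv (a, k)) = a := by
    ext; simp
  let blocks : Fin n × (Fin m ⊕ Fin 1) ≃ Fin (n * (m + 1)) :=
    (Equiv.prodCongr (Equiv.refl (Fin n)) finSumFinEquiv).trans finProdFinEquiv
  ext i j
  obtain ⟨⟨a, k | k⟩, rfl⟩ := blocks.surjective i <;>
  obtain ⟨⟨b, l | l⟩, rfl⟩ := blocks.surjective j <;>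
  simp [blocks, -finSumFinEquiv_apply_left, -finSumFinEquiv_apply_right, dirSumM,
    amplifySuccEquiv, hcast, Fin.fin_one_eq_zero]

namespace OperatorSpace

variable {𝕜 : Type*} [RCLike 𝕜] {V : Type*} [AddCommGroup V] [Module 𝕜 V]
  (os : OperatorSpace 𝕜 V)

theorem norm_submatrix_le {k l : ℕ} (e : Fin k ≃ Fin l) (A : Matrix (Fin l) (Fin l) V) :
    os.N k (A.submatrix e e) ≤ os.N l A := by
  obtain rfl : k = l := by simpa using Fintype.card_congr e
  have hconj : A.submatrix e e =
      smulLs 𝕜 (Equiv.Perm.permMatrix 𝕜 e) (smulRs 𝕜 A (Equiv.Perm.permMatrix 𝕜 e⁻¹)) := by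
    ext i j
    simp [smulLs, smulRs, Equiv.symm_apply_eq]
  have hperm (σ : Equiv.Perm (Fin k)) : scalarOpNorm (σ.permMatrix 𝕜) ≤ 1 := by
    open scoped Matrix.Norms.L2Operator in exact Matrix.permMatrix_l2_opNorm_le σ
  have hA := os.norm_nonneg k A
  have hT : 0 ≤ scalarOpNorm (Equiv.Perm.permMatrix 𝕜 e⁻¹) := _root_.norm_nonneg _
  calc os.N k (A.submatrix e e)
      ≤ scalarOpNorm (Equiv.Perm.permMatrix 𝕜 e) * os.N k A *
          scalarOpNorm (Equiv.Perm.permMatrix 𝕜 e⁻¹) :=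
        hconj ▸ os.norm_smulLR _ _ _ _
    _ ≤ 1 * os.N k A * 1 := by gcongr <;> exact hperm _
    _ = os.N k A := by ring

theorem norm_amplify_le {n : ℕ} (m : ℕ) (X : Matrix (Fin n) (Fin n) V) :
    os.N (n * m) (amplify m X) ≤ os.N n X := by
  induction m with
  | zero => simpa [amplify_zero, (os.norm_eq_zero _ 0).mpr rfl] using os.norm_nonneg n X
  | succ m ih =>
    calc os.N (n * (m + 1)) (amplify (m + 1) X)
        ≤ os.N (n * m + n) (dirSumM (amplify m X) X) := by
          rw [amplify_succ]; exact os.norm_submatrix_le _ _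
      _ = max (os.N (n * m) (amplify m X)) (os.N n X) := os.norm_dirSum _ _ _ _
      _ ≤ os.N n X := max_le ih le_rfl

theorem norm_sub_amplify_le {n m : ℕ} (Z : Matrix (Fin (n * m)) (Fin (n * m)) V)
    (X X' : Matrix (Fin n) (Fin n) V) :
    os.N (n * m) (Z - amplify m X') ≤ os.N (n * m) (Z - amplify m X) + os.N n (X - X') :=
  calc os.N (n * m) (Z - amplify m X')
      = os.N (n * m) ((Z - amplify m X) + amplify m (X - X')) := by
        rw [amplify_sub]; abel_nf
    _ ≤ os.N (n * m) (Z - amplify m X) + os.N (n * m) (amplify m (X - X')) :=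
        os.norm_add_le _ _ _
    _ ≤ os.N (n * m) (Z - amplify m X) + os.N n (X - X') := by
        gcongr; exact os.norm_amplify_le m _

end OperatorSpace

theorem IsC1MatOn.eventually_norm_sub_lt {V : Type*} [AddCommGroup V] [Module ℝ V]
    {os : OperatorSpace ℝ V} {n : ℕ} {a b : ℝ} {Y Yd : ℝ → Matrix (Fin n) (Fin n) V}
    (hY : IsC1MatOn os a b Y Yd) {t : ℝ} (ht : t ∈ Set.Icc a b) {ε : ℝ} (hε : 0 < ε) :
    ∀ᶠ t' in 𝓝 t, t' ∈ Set.Icc a b → os.N n (Y t' - Y t) < ε := by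
  obtain ⟨η, hη, hderiv⟩ := hY.1 t ht 1 one_pos
  set C := os.N n (Yd t)
  have hC : 0 ≤ C := os.norm_nonneg _ _
  refine Metric.eventually_nhds_iff.mpr
    ⟨min η (ε / (1 + C)), by positivity, fun t' hdist ht' => ?_⟩
  rw [Real.dist_eq, lt_min_iff, lt_div_iff₀ (by positivity)] at hdist
  calc os.N n (Y t' - Y t)
      = os.N n ((Y t' - Y t - (t' - t) • Yd t) + (t' - t) • Yd t) := by rw [sub_add_cancel]
    _ ≤ os.N n (Y t' - Y t - (t' - t) • Yd t) + os.N n ((t' - t) • Yd t) :=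
        os.norm_add_le _ _ _
    _ ≤ 1 * |t' - t| + |t' - t| * C := by
        rw [os.norm_smul, Real.norm_eq_abs]
        gcongr
        exact hderiv t' ht' hdist.1
    _ < ε := by linarith [hdist.2]

theorem UniformlyOpenNC.exists_uniform_radius {𝕜 : Type*} [RCLike 𝕜] {V : Type*}
    [AddCommGroup V] [Module 𝕜 V] {os : OperatorSpace 𝕜 V}
    {Γ : ∀ n : ℕ, Set (Matrix (Fin n) (Fin n) V)} (hΓ : UniformlyOpenNC os Γ)
    {α : Type*} [TopologicalSpace α] {K : Set α} (hK : IsCompact K) {n : ℕ}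
    {Y : α → Matrix (Fin n) (Fin n) V}
    (hY : ∀ t₀ ∈ K, ∀ ε : ℝ, 0 < ε → ∀ᶠ t in 𝓝 t₀, t ∈ K → os.N n (Y t - Y t₀) < ε)
    (hval : ∀ t ∈ K, Y t ∈ Γ n) :
    ∃ μ : ℝ, 0 < μ ∧ ∀ t ∈ K, ∀ (m : ℕ) (Z : Matrix (Fin (n * m)) (Fin (n * m)) V),
      os.N (n * m) (Z - amplify m (Y t)) < μ → Z ∈ Γ (n * m) := by
  -- The radius is a parameter near `0`, so the tube lemma over `K` makes it uniform.
  have hlocal (t₀ : α) (ht₀ : t₀ ∈ K) : ∀ᶠ p : ℝ × α in 𝓝 (0, t₀), p.2 ∈ K →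
      ∀ (m : ℕ) (Z : Matrix (Fin (n * m)) (Fin (n * m)) V),
        os.N (n * m) (Z - amplify m (Y p.2)) < p.1 → Z ∈ Γ (n * m) := by
    obtain ⟨ρ, hρ, hball⟩ := hΓ n (Y t₀) (hval t₀ ht₀)
    filter_upwards [(eventually_lt_nhds (half_pos hρ)).prodMk_nhds (hY t₀ ht₀ _ (half_pos hρ))]
      with ⟨μ, t⟩ ⟨hμ, ht⟩ htK m Z hZ
    refine hball m Z ?_
    calc os.N (n * m) (Z - amplify m (Y t₀))
        ≤ os.N (n * m) (Z - amplify m (Y t)) + os.N n (Y t - Y t₀) :=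
          os.norm_sub_amplify_le Z _ _
      _ < ρ := by linarith [ht htK]
  have huniform : ∀ᶠ μ in 𝓝 (0 : ℝ), ∀ t ∈ K, t ∈ K →
      ∀ (m : ℕ) (Z : Matrix (Fin (n * m)) (Fin (n * m)) V),
        os.N (n * m) (Z - amplify m (Y t)) < μ → Z ∈ Γ (n * m) :=
    hK.eventually_forall_of_forall_eventually hlocal
  obtain ⟨μ, hμ, hμpos⟩ :=
    ((huniform.filter_mono nhdsWithin_le_nhds).and (self_mem_nhdsWithin (s := Set.Ioi 0))).exists
  exact ⟨μ, hμpos, fun t ht => hμ t ht ht⟩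

theorem c1_functions_into_uniformly_open_nc_set_uniformly_open_general
    {Xs : Type*} [AddCommGroup Xs] [Module ℝ Xs]
    (osX : OperatorSpace ℝ Xs)
    (Γ : ∀ n : ℕ, Set (Matrix (Fin n) (Fin n) Xs))
    (hΓopen : UniformlyOpenNC osX Γ)
    (s r : ℕ)
    (a b : ℝ)
    (Ystar Ystard : ℝ → Matrix (Fin (s * r)) (Fin (s * r)) Xs)
    (hC1 : IsC1MatOn osX a b Ystar Ystard)
    (hval : ∀ t ∈ Set.Icc a b, Ystar t ∈ Γ (s * r)) :
    ∃ μ : ℝ, 0 < μ ∧ ∀ (m : ℕ)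
      (Y Yd : ℝ → Matrix (Fin (s * r * m)) (Fin (s * r * m)) Xs),
      IsC1MatOn osX a b Y Yd →
      (∃ c : ℝ, c < μ ∧ ∀ t ∈ Set.Icc a b,
        osX.N (s * r * m) (Y t - amplify m (Ystar t)) ≤ c ∧
        osX.N (s * r * m) (Yd t - amplify m (Ystard t)) ≤ c) →
      ∀ t ∈ Set.Icc a b, Y t ∈ Γ (s * r * m) := by
  obtain ⟨μ, hμ, hball⟩ := hΓopen.exists_uniform_radius isCompact_Icc
    (fun _ ht _ hε => hC1.eventually_norm_sub_lt ht hε) hval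
  exact ⟨μ, hμ, fun m Y _ _ ⟨c, hc, hclose⟩ t ht =>
    hball t ht m (Y t) ((hclose t ht).1.trans_lt hc)⟩

/-- **C¹ functions with values in a uniformly open nc set form a uniformly open nc set**:
around any C¹ function `Y_*` with values in `Γ` there is a C¹-ball (uniformly over all
amplification levels `m`) of C¹ functions with values in `Γ`. -/
theorem c1_functions_into_uniformly_open_nc_set_uniformly_open
    {Xs : Type*} [AddCommGroup Xs] [Module ℝ Xs]
    (osX : OperatorSpace ℝ Xs)
    (Γ : ∀ n : ℕ, Set (Matrix (Fin n) (Fin n) Xs))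
    (hΓnc : IsNCSet Γ) (hΓopen : UniformlyOpenNC osX Γ)
    (s r : ℕ) (hs : 0 < s) (hr : 0 < r)
    (a b : ℝ) (hab : a ≤ b)
    (Ystar Ystard : ℝ → Matrix (Fin (s * r)) (Fin (s * r)) Xs)
    (hC1 : IsC1MatOn osX a b Ystar Ystard)
    (hval : ∀ t ∈ Set.Icc a b, Ystar t ∈ Γ (s * r)) :
    ∃ μ : ℝ, 0 < μ ∧ ∀ (m : ℕ)
      (Y Yd : ℝ → Matrix (Fin (s * r * m)) (Fin (s * r * m)) Xs),
      IsC1MatOn osX a b Y Yd →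
      (∃ c : ℝ, c < μ ∧ ∀ t ∈ Set.Icc a b,
        osX.N (s * r * m) (Y t - amplify m (Ystar t)) ≤ c ∧
        osX.N (s * r * m) (Yd t - amplify m (Ystard t)) ≤ c) →
      ∀ t ∈ Set.Icc a b, Y t ∈ Γ (s * r * m) :=
  c1_functions_into_uniformly_open_nc_set_uniformly_open_general osX Γ hΓopen s r a b Ystar Ystard
    hC1 hval
end

section
/- Invertibility and norm bound for a Volterra-type operator on C¹. Let E be a real Banach space, t₀ ∈ ℝ, δ ∈ (0, 1], and let A : [t₀−δ, t₀+δ] → L(E) be a continuous family of bounded linear operators with κ := max_{t∈[t₀−δ,t₀+δ]} ‖A(t)‖ < 1/δ. Define the linear operator T on C¹([t₀−δ, t₀+δ], E) by (TZ)(t) = Z(t) − ∫_{t₀}^{t} A(τ)(Z(τ)) dτ. Then T is a bounded linear bijection of C¹([t₀−δ, t₀+δ], E) onto itself, and its inverse satisfies ‖T^{−1}G‖_{C¹} ≤ ((1 − κδ + κ)/(1 − κδ)) ‖G‖_{C¹} for every G ∈ C¹([t₀−δ, t₀+δ], E), where ‖Z‖_{C¹} = max{ sup_t ‖Z(t)‖,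 sup_t ‖Ż(t)‖ }. -/
/-!
On `C([t0 - δ, t0 + δ], E)` with the sup norm, the Volterra operator
`V f (t) = ∫_{t0}^t A τ (f τ) dτ` has norm at most `κ δ < 1`, so `1 - V` is invertible by the
Neumann series, and a solution of `Z - V Z = G` satisfies `(1 - κ δ) ‖Z‖∞ ≤ ‖G‖∞`.
By the fundamental theorem of calculus, `Z - V Z` is `C¹` exactly when `Z` is, with derivative
`Ż - A Z`; hence `Ż = Ġ + A Z`, so `‖Ż‖∞ ≤ ‖G‖_{C¹} + κ ‖Z‖∞`, and the two estimates combine into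
the stated bound on the inverse.
-/

/-- `Z` is continuously differentiable on `[t0-δ, t0+δ]` with derivative `Zd`. -/
def IsC1OnIcc {E : Type*} [NormedAddCommGroup E] [NormedSpace ℝ E]
    (t0 δ : ℝ) (Z Zd : ℝ → E) : Prop :=
  (∀ t ∈ Set.Icc (t0 - δ) (t0 + δ),
    HasDerivWithinAt Z (Zd t) (Set.Icc (t0 - δ) (t0 + δ)) t) ∧
  ContinuousOn Zd (Set.Icc (t0 - δ) (t0 + δ))

open Set intervalIntegral ContinuousMap

theorem ContinuousLinearMap.one_sub_mul_norm_le_norm_sub_apply {𝕜 F : Type*}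
    [NontriviallyNormedField 𝕜] [SeminormedAddCommGroup F] [NormedSpace 𝕜 F] (V : F →L[𝕜] F)
    {c : ℝ} (hV : ‖V‖ ≤ c) (f : F) :
    (1 - c) * ‖f‖ ≤ ‖f - V f‖ := by
  have := norm_sub_norm_le f (V f)
  have := V.le_of_opNorm_le hV f
  linarith

theorem ContinuousLinearMap.existsUnique_sub_apply_eq {𝕜 F : Type*} [NontriviallyNormedField 𝕜]
    [NormedAddCommGroup F] [NormedSpace 𝕜 F] [CompleteSpace F] (V : F →L[𝕜] F) (hV : ‖V‖ < 1)
    (g : F) : ∃! f, f - V f = g := by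
  let e := ContinuousLinearEquiv.unitsEquiv 𝕜 F (Units.oneSub V hV)
  have he : ∀ f, e f = f - V f := fun f => by simp [e, Units.val_oneSub]
  simpa only [he] using e.bijective.existsUnique g

theorem ContinuousOn.hasDerivWithinAt_integral_Icc {E : Type*} [NormedAddCommGroup E]
    [NormedSpace ℝ E] [CompleteSpace E] {a b t0 t : ℝ} {u : ℝ → E}
    (hu : ContinuousOn u (Icc a b)) (ht0 : t0 ∈ Icc a b) (ht : t ∈ Icc a b) :
    HasDerivWithinAt (fun x => ∫ τ in t0..x, u τ) (u t) (Icc a b) t := by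
  have : Fact (t ∈ Icc a b) := ⟨ht⟩
  exact integral_hasDerivWithinAt_right (hu.mono (uIcc_subset_Icc ht0 ht)).intervalIntegrable
    (hu.stronglyMeasurableAtFilter_nhdsWithin measurableSet_Icc t) (hu t ht)

theorem norm_integral_clm_apply_le {E F : Type*} [NormedAddCommGroup E] [NormedSpace ℝ E]
    [NormedAddCommGroup F] [NormedSpace ℝ F] {A : ℝ → F →L[ℝ] E} {Z : ℝ → F} {t0 t κ B : ℝ}
    (hA : ∀ τ ∈ uIoc t0 t, ‖A τ‖ ≤ κ) (hZ : ∀ τ ∈ uIoc t0 t, ‖Z τ‖ ≤ B) :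
    ‖∫ τ in t0..t, A τ (Z τ)‖ ≤ κ * B * |t - t0| :=
  norm_integral_le_of_norm_le_const fun τ hτ => (A τ).le_of_opNorm_le_of_le (hA τ hτ) (hZ τ hτ)

theorem abs_sub_le_max_of_mem_Icc {a b t t0 : ℝ} (ht : t ∈ Icc a b) :
    |t - t0| ≤ max |a - t0| |b - t0| :=
  abs_le_max_abs_abs (sub_le_sub_right ht.1 t0) (sub_le_sub_right ht.2 t0)

@[simps]
def ContinuousOn.restrictCM {α β : Type*} [TopologicalSpace α] [TopologicalSpace β] {s : Set α}
    {f : α → β} (hf : ContinuousOn f s) : C(s, β) :=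
  ⟨s.domRestrict f, hf.domRestrict⟩

theorem ContinuousOn.norm_restrictCM_le {α F : Type*} [TopologicalSpace α]
    [SeminormedAddCommGroup F] {s : Set α} [CompactSpace s] {f : α → F} (hf : ContinuousOn f s)
    {C : ℝ} (hC : 0 ≤ C) (h : ∀ x ∈ s, ‖f x‖ ≤ C) : ‖hf.restrictCM‖ ≤ C :=
  (ContinuousMap.norm_le _ hC).2 fun x => h x x.2

section Volterra

variable {E : Type*} [NormedAddCommGroup E] [NormedSpace ℝ E] {a b : ℝ} [Fact (a ≤ b)]

/-- Outside `[a, b]`, `K` and `f` are extended constantly (via `projIccCM`); this matters only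
when `t0 ∉ [a, b]`. -/
noncomputable def volterraₗ (K : C(Icc a b, E →L[ℝ] E)) (t0 : ℝ) :
    C(Icc a b, E) →ₗ[ℝ] C(Icc a b, E) where
  toFun f := ⟨fun t => ∫ τ in t0..t, K (projIccCM τ) (f (projIccCM τ)),
    (continuous_primitive (fun _ _ => (by fun_prop : Continuous _).intervalIntegrable _ _) t0).comp
      continuous_subtype_val⟩
  map_add' f g := by
    ext t
    simp only [ContinuousMap.add_apply, map_add, ContinuousMap.coe_mk]
    exact integral_add ((by fun_prop : Continuous _).intervalIntegrable _ _)
      ((by fun_prop : Continuous _).intervalIntegrable _ _)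
  map_smul' c f := by
    ext t
    simp [integral_smul]

theorem norm_volterraₗ_apply_le (K : C(Icc a b, E →L[ℝ] E)) (t0 : ℝ) (f : C(Icc a b, E))
    (t : Icc a b) : ‖volterraₗ K t0 f t‖ ≤ ‖K‖ * ‖f‖ * |t - t0| :=
  norm_integral_clm_apply_le (fun _ _ => K.norm_coe_le_norm _) (fun _ _ => f.norm_coe_le_norm _)

noncomputable def volterra (K : C(Icc a b, E →L[ℝ] E)) (t0 : ℝ) :
    C(Icc a b, E) →L[ℝ] C(Icc a b, E) :=
  (volterraₗ K t0).mkContinuous (‖K‖ * max |a - t0| |b - t0|) fun f =>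
    (ContinuousMap.norm_le _ (by positivity)).2 fun t =>
      calc ‖volterraₗ K t0 f t‖ ≤ ‖K‖ * ‖f‖ * |t - t0| := norm_volterraₗ_apply_le K t0 f t
        _ ≤ ‖K‖ * ‖f‖ * max |a - t0| |b - t0| := by gcongr; exact abs_sub_le_max_of_mem_Icc t.2
        _ = ‖K‖ * max |a - t0| |b - t0| * ‖f‖ := by ring

theorem norm_volterra_le {K : C(Icc a b, E →L[ℝ] E)} {t0 κ δ : ℝ} (hK : ‖K‖ ≤ κ)
    (hδ : ∀ t ∈ Icc a b, |t - t0| ≤ δ) : ‖volterra K t0‖ ≤ κ * δ := by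
  have hκ : 0 ≤ κ := (norm_nonneg K).trans hK
  have hδ0 : 0 ≤ δ := (abs_nonneg _).trans (hδ a (left_mem_Icc.2 Fact.out))
  refine ContinuousLinearMap.opNorm_le_bound _ (mul_nonneg hκ hδ0) fun f =>
    (ContinuousMap.norm_le _ (by positivity)).2 fun t => (norm_volterraₗ_apply_le K t0 f t).trans ?_
  calc ‖K‖ * ‖f‖ * |t - t0| ≤ κ * ‖f‖ * δ := by gcongr; exact hδ t t.2
    _ = κ * δ * ‖f‖ := by ring

theorem volterra_restrictCM_apply {A : ℝ → E →L[ℝ] E} (hA : ContinuousOn A (Icc a b))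
    {Z : ℝ → E} (hZ : ContinuousOn Z (Icc a b)) {t0 : ℝ} (ht0 : t0 ∈ Icc a b) (t : Icc a b) :
    volterra hA.restrictCM t0 hZ.restrictCM t = ∫ τ in t0..t, A τ (Z τ) :=
  integral_congr fun τ hτ => by simp [projIccCM, projIcc_of_mem _ (uIcc_subset_Icc ht0 t.2 hτ)]

end Volterra

section VolterraEquation

variable {E : Type*} [NormedAddCommGroup E] [NormedSpace ℝ E] [CompleteSpace E] {a b t0 κ δ : ℝ}
  {A : ℝ → E →L[ℝ] E}

theorem exists_continuousOn_sub_integral_eq (hA : ContinuousOn A (Icc a b))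
    (hκ : ∀ t ∈ Icc a b, ‖A t‖ ≤ κ) (hδ : ∀ t ∈ Icc a b, |t - t0| ≤ δ) (hκδ : κ * δ < 1)
    (ht0 : t0 ∈ Icc a b) {G : ℝ → E} (hG : ContinuousOn G (Icc a b)) :
    ∃ Z, ContinuousOn Z (Icc a b) ∧ (∀ t ∈ Icc a b, Z t - ∫ τ in t0..t, A τ (Z τ) = G t) ∧
      ∀ B, (∀ t ∈ Icc a b, ‖G t‖ ≤ B) → ∀ t ∈ Icc a b, (1 - κ * δ) * ‖Z t‖ ≤ B := by
  have : Fact (a ≤ b) := ⟨ht0.1.trans ht0.2⟩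
  set V := volterra hA.restrictCM t0
  have hV : ‖V‖ ≤ κ * δ :=
    norm_volterra_le (hA.norm_restrictCM_le ((norm_nonneg _).trans (hκ t0 ht0)) hκ) hδ
  obtain ⟨Zc, hZc, -⟩ := V.existsUnique_sub_apply_eq (hV.trans_lt hκδ) hG.restrictCM
  have hZ : ContinuousOn (IccExtendCM Zc) (Icc a b) := (IccExtendCM Zc).continuous.continuousOn
  have hZc_eq : hZ.restrictCM = Zc := ext fun t => IccExtendCM_of_mem t.2
  refine ⟨IccExtendCM Zc, hZ, fun t ht => ?_, fun B hB t ht => ?_⟩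
  · rw [← volterra_restrictCM_apply hA hZ ht0 ⟨t, ht⟩, hZc_eq, IccExtendCM_of_mem ht]
    simpa using congr($hZc ⟨t, ht⟩)
  · calc (1 - κ * δ) * ‖IccExtendCM Zc t‖ ≤ (1 - κ * δ) * ‖Zc‖ := by
          gcongr
          exact (IccExtendCM_of_mem (f := Zc) ht).symm ▸ Zc.norm_coe_le_norm ⟨t, ht⟩
      _ ≤ ‖Zc - V Zc‖ := V.one_sub_mul_norm_le_norm_sub_apply hV Zc
      _ ≤ B := hZc ▸ hG.norm_restrictCM_le ((norm_nonneg _).trans (hB t ht)) hB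

theorem eqOn_of_sub_integral_eq (hA : ContinuousOn A (Icc a b))
    (hκ : ∀ t ∈ Icc a b, ‖A t‖ ≤ κ) (hδ : ∀ t ∈ Icc a b, |t - t0| ≤ δ) (hκδ : κ * δ < 1)
    (ht0 : t0 ∈ Icc a b) {Z Z' G : ℝ → E} (hZ : ContinuousOn Z (Icc a b))
    (hZ' : ContinuousOn Z' (Icc a b))
    (hZG : ∀ t ∈ Icc a b, Z t - ∫ τ in t0..t, A τ (Z τ) = G t)
    (hZ'G : ∀ t ∈ Icc a b, Z' t - ∫ τ in t0..t, A τ (Z' τ) = G t) :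
    EqOn Z Z' (Icc a b) := by
  have : Fact (a ≤ b) := ⟨ht0.1.trans ht0.2⟩
  set V := volterra hA.restrictCM t0
  have hV : ‖V‖ ≤ κ * δ :=
    norm_volterra_le (hA.norm_restrictCM_le ((norm_nonneg _).trans (hκ t0 ht0)) hκ) hδ
  have h : hZ.restrictCM - V hZ.restrictCM = hZ'.restrictCM - V hZ'.restrictCM := by
    ext t
    simp [V, volterra_restrictCM_apply hA _ ht0, hZG t t.2, hZ'G t t.2]
  intro t ht
  exact congr($((V.existsUnique_sub_apply_eq (hV.trans_lt hκδ) _).unique h rfl) ⟨t, ht⟩)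

end VolterraEquation

section IsC1OnIcc

variable {E : Type*} [NormedAddCommGroup E] [NormedSpace ℝ E] {t0 δ : ℝ} {A : ℝ → E →L[ℝ] E}
  {Z Zd : ℝ → E}

theorem IsC1OnIcc.continuousOn (hZ : IsC1OnIcc t0 δ Z Zd) :
    ContinuousOn Z (Icc (t0 - δ) (t0 + δ)) :=
  fun t ht => (hZ.1 t ht).continuousWithinAt

theorem IsC1OnIcc.sub_integral [CompleteSpace E] (hδ : 0 ≤ δ)
    (hA : ContinuousOn A (Icc (t0 - δ) (t0 + δ))) (hZ : IsC1OnIcc t0 δ Z Zd) :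
    IsC1OnIcc t0 δ (fun t => Z t - ∫ τ in t0..t, A τ (Z τ)) (fun t => Zd t - A t (Z t)) := by
  have hAZ : ContinuousOn (fun t => A t (Z t)) (Icc (t0 - δ) (t0 + δ)) :=
    hA.clm_apply hZ.continuousOn
  refine ⟨fun t ht => (hZ.1 t ht).sub ?_, hZ.2.sub hAZ⟩
  exact hAZ.hasDerivWithinAt_integral_Icc ⟨by linarith, by linarith⟩ ht

theorem ContinuousOn.isC1OnIcc_of_sub_integral_eq [CompleteSpace E] {G Gd : ℝ → E}
    (hZ : ContinuousOn Z (Icc (t0 - δ) (t0 + δ))) (hδ : 0 ≤ δ)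
    (hA : ContinuousOn A (Icc (t0 - δ) (t0 + δ))) (hG : IsC1OnIcc t0 δ G Gd)
    (hZG : ∀ t ∈ Icc (t0 - δ) (t0 + δ), Z t - ∫ τ in t0..t, A τ (Z τ) = G t) :
    IsC1OnIcc t0 δ Z (fun t => Gd t + A t (Z t)) := by
  have hAZ : ContinuousOn (fun t => A t (Z t)) (Icc (t0 - δ) (t0 + δ)) := hA.clm_apply hZ
  have hZ_eq : ∀ t ∈ Icc (t0 - δ) (t0 + δ), Z t = G t + ∫ τ in t0..t, A τ (Z τ) :=
    fun t ht => eq_add_of_sub_eq (hZG t ht)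
  refine ⟨fun t ht => ?_, hG.2.add hAZ⟩
  exact ((hG.1 t ht).add (hAZ.hasDerivWithinAt_integral_Icc ⟨by linarith, by linarith⟩ ht)).congr
    hZ_eq (hZ_eq t ht)

end IsC1OnIcc

theorem max_norm_sub_integral_le {E : Type*} [NormedAddCommGroup E] [NormedSpace ℝ E]
    {A : ℝ → E →L[ℝ] E} {Z Zd : ℝ → E} {t0 t κ B : ℝ} (hκ0 : 0 ≤ κ) (ht : |t - t0| ≤ 1)
    (hA : ∀ τ ∈ uIcc t0 t, ‖A τ‖ ≤ κ) (hB : ∀ τ ∈ uIcc t0 t, max ‖Z τ‖ ‖Zd τ‖ ≤ B) :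
    max ‖Z t - ∫ τ in t0..t, A τ (Z τ)‖ ‖Zd t - A t (Z t)‖ ≤ (1 + κ) * B := by
  have hZB : ∀ τ ∈ uIcc t0 t, ‖Z τ‖ ≤ B := fun τ hτ => (le_max_left _ _).trans (hB τ hτ)
  have hB0 : 0 ≤ B := (norm_nonneg _).trans (hZB t right_mem_uIcc)
  have hint : ‖∫ τ in t0..t, A τ (Z τ)‖ ≤ κ * B :=
    calc ‖∫ τ in t0..t, A τ (Z τ)‖ ≤ κ * B * |t - t0| :=
          norm_integral_clm_apply_le (fun τ hτ => hA τ (uIoc_subset_uIcc hτ))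
            (fun τ hτ => hZB τ (uIoc_subset_uIcc hτ))
      _ ≤ κ * B := mul_le_of_le_one_right (by positivity) ht
  refine max_le ?_ ?_
  · linarith [norm_sub_le (Z t) (∫ τ in t0..t, A τ (Z τ)), hZB t right_mem_uIcc]
  · linarith [norm_sub_le (Zd t) (A t (Z t)), (le_max_right _ _).trans (hB t right_mem_uIcc),
      (A t).le_of_opNorm_le_of_le (hA t right_mem_uIcc) (hZB t right_mem_uIcc)]

theorem max_le_div_mul_of_one_sub_mul_le {x y c κ B : ℝ} (hc : c < 1) (hcκ : c ≤ κ) (hκ : 0 ≤ κ)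
    (hx0 : 0 ≤ x) (hx : (1 - c) * x ≤ B) (hy : y ≤ B + κ * x) :
    max x y ≤ (1 - c + κ) / (1 - c) * B := by
  have hc' : 0 < 1 - c := by linarith
  have hB : 0 ≤ B := (mul_nonneg hc'.le hx0).trans hx
  rw [div_mul_eq_mul_div, le_div_iff₀ hc', max_mul_of_nonneg _ _ hc'.le]
  exact max_le (by nlinarith [mul_nonneg (sub_nonneg.2 hcκ) hB]) (by nlinarith)

/-- **Invertibility and norm bound for a Volterra-type operator on C¹**:
`(TZ)(t) = Z(t) - ∫_{t0}^t A(τ)(Z(τ)) dτ` is a bounded linear bijection of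
`C¹([t0-δ, t0+δ], E)` onto itself and
`‖T⁻¹G‖_{C¹} ≤ ((1 - κδ + κ)/(1 - κδ))‖G‖_{C¹}`. -/
theorem volterra_type_operator_invertible_on_C1
    {E : Type*} [NormedAddCommGroup E] [NormedSpace ℝ E] [CompleteSpace E]
    (t0 δ : ℝ) (hδ0 : 0 < δ) (hδ1 : δ ≤ 1)
    (A : ℝ → E →L[ℝ] E)
    (hAcont : ContinuousOn A (Set.Icc (t0 - δ) (t0 + δ)))
    (κ : ℝ) (hκ0 : 0 ≤ κ)
    (hκ : ∀ t ∈ Set.Icc (t0 - δ) (t0 + δ), ‖A t‖ ≤ κ)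
    (hκδ : κ * δ < 1) :
    -- T maps C¹ into C¹, with derivative of TZ given by Zd(t) - A(t)(Z(t))
    (∀ Z Zd : ℝ → E, IsC1OnIcc t0 δ Z Zd →
      IsC1OnIcc t0 δ (fun t => Z t - ∫ τ in t0..t, A τ (Z τ))
        (fun t => Zd t - A t (Z t))) ∧
    -- T is bounded on C¹
    (∃ C : ℝ, ∀ (Z Zd : ℝ → E) (bZ : ℝ), IsC1OnIcc t0 δ Z Zd →
      (∀ t ∈ Set.Icc (t0 - δ) (t0 + δ), max ‖Z t‖ ‖Zd t‖ ≤ bZ) →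
      ∀ t ∈ Set.Icc (t0 - δ) (t0 + δ),
        max ‖Z t - ∫ τ in t0..t, A τ (Z τ)‖ ‖Zd t - A t (Z t)‖ ≤ C * bZ) ∧
    -- T is a bijection of C¹ onto itself, with the stated bound on the inverse:
    -- for every C¹ function G, there is a C¹ solution Z of TZ = G with
    -- ‖Z‖_{C¹} ≤ ((1 - κδ + κ)/(1 - κδ))‖G‖_{C¹}, and the solution is unique
    (∀ G Gd : ℝ → E, IsC1OnIcc t0 δ G Gd →
      (∃ Z Zd : ℝ → E, IsC1OnIcc t0 δ Z Zd ∧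
        (∀ t ∈ Set.Icc (t0 - δ) (t0 + δ), Z t - ∫ τ in t0..t, A τ (Z τ) = G t) ∧
        ∀ bG : ℝ, (∀ t ∈ Set.Icc (t0 - δ) (t0 + δ), max ‖G t‖ ‖Gd t‖ ≤ bG) →
          ∀ t ∈ Set.Icc (t0 - δ) (t0 + δ),
            max ‖Z t‖ ‖Zd t‖ ≤ ((1 - κ * δ + κ) / (1 - κ * δ)) * bG) ∧
      (∀ Z Zd Z' Zd' : ℝ → E, IsC1OnIcc t0 δ Z Zd → IsC1OnIcc t0 δ Z' Zd' →
        (∀ t ∈ Set.Icc (t0 - δ) (t0 + δ), Z t - ∫ τ in t0..t, A τ (Z τ) = G t) →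
        (∀ t ∈ Set.Icc (t0 - δ) (t0 + δ), Z' t - ∫ τ in t0..t, A τ (Z' τ) = G t) →
        ∀ t ∈ Set.Icc (t0 - δ) (t0 + δ), Z t = Z' t)) := by
  have ht0 : t0 ∈ Icc (t0 - δ) (t0 + δ) := ⟨by linarith, by linarith⟩
  have hdist : ∀ t ∈ Icc (t0 - δ) (t0 + δ), |t - t0| ≤ δ :=
    fun t ht => (abs_sub_comm t t0).trans_le (mem_Icc_iff_abs_le.2 ht)
  refine ⟨fun Z Zd hZ => hZ.sub_integral hδ0.le hAcont, ⟨1 + κ, fun Z Zd bZ _ hbZ t ht => ?_⟩,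
    fun G Gd hG => ⟨?_, fun W Wd W' Wd' hW hW' hWG hW'G =>
      eqOn_of_sub_integral_eq hAcont hκ hdist hκδ ht0 hW.continuousOn hW'.continuousOn hWG hW'G⟩⟩
  · have hsub := uIcc_subset_Icc ht0 ht
    exact max_norm_sub_integral_le hκ0 ((hdist t ht).trans hδ1) (fun τ hτ => hκ τ (hsub hτ))
      (fun τ hτ => hbZ τ (hsub hτ))
  obtain ⟨Z, hZ, hZG, hZ_le⟩ :=
    exists_continuousOn_sub_integral_eq hAcont hκ hdist hκδ ht0 hG.continuousOn
  refine ⟨Z, _, hZ.isC1OnIcc_of_sub_integral_eq hδ0.le hAcont hG hZG, hZG, fun bG hbG t ht => ?_⟩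
  refine max_le_div_mul_of_one_sub_mul_le hκδ (mul_le_of_le_one_right hκ0 hδ1) hκ0 (norm_nonneg _)
    (hZ_le bG (fun s hs => (le_max_left _ _).trans (hbG s hs)) t ht) ?_
  calc ‖Gd t + A t (Z t)‖ ≤ ‖Gd t‖ + ‖A t (Z t)‖ := norm_add_le _ _
    _ ≤ bG + κ * ‖Z t‖ :=
      add_le_add ((le_max_right _ _).trans (hbG t ht)) ((A t).le_of_opNorm_le (hκ t ht) _)
end

section
/- Nilpotent nc sets are closed under block upper triangular matrices, with additive rank bound. Let M be a module over a unital commutative ring R, s ∈ ℕ, and Y⁰ ∈ M^{s×s}. If X ∈ Nilp(M, Y⁰; sn, κ₁), X′ ∈ Nilp(M, Y⁰; sm, κ₂), and Z ∈ M^{sn×sm} is arbitrary, then the block matrix [[X, Z],[0, X′]] belongs to Nilp(M, Y⁰; s(n+m), κ₁+κ₂). In particular, Nilp(M, Y⁰) is a nc set closed under forming block upper triangular matrices with arbitrary off-diagonal block (hence right admissible). -/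
/-! ## Core definitions for free noncommutative (nc) functions in the nilpotent setting.

Matrices at "level m over the base size s" are represented as m×m matrices whose
entries are s×s matrices over the module (i.e. sm×sm matrices in block form). -/

section NCNilpCore

variable (R : Type*) [CommRing R]

/-- Right action of a scalar `s×s` block on an `s×s` block over a module:
`(A · S) a b = ∑ c, S c b • A a c`. -/
def smallMR {M : Type*} [AddCommMonoid M] [Module R M] {s : ℕ}
    (A : Matrix (Fin s) (Fin s) M) (S : Matrix (Fin s) (Fin s) R) :
    Matrix (Fin s) (Fin s) M :=
  Matrix.of fun a b => ∑ c, S c b • A a c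

/-- Left action of a scalar `s×s` block on an `s×s` block over a module:
`(S · A) a b = ∑ c, S a c • A c b`. -/
def smallRM {M : Type*} [AddCommMonoid M] [Module R M] {s : ℕ}
    (S : Matrix (Fin s) (Fin s) R) (A : Matrix (Fin s) (Fin s) M) :
    Matrix (Fin s) (Fin s) M :=
  Matrix.of fun a b => ∑ c, S a c • A c b

/-- The product `X · T` of an `n×n` block matrix over `M^{s×s}` with an `n×m`
block scalar matrix `T` over `R^{s×s}`. -/
def bSmulR {M : Type*} [AddCommMonoid M] [Module R M] {s n m : ℕ}
    (X : Matrix (Fin n) (Fin n) (Matrix (Fin s) (Fin s) M))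
    (T : Matrix (Fin n) (Fin m) (Matrix (Fin s) (Fin s) R)) :
    Matrix (Fin n) (Fin m) (Matrix (Fin s) (Fin s) M) :=
  Matrix.of fun p q => ∑ k, smallMR R (X p k) (T k q)

/-- The product `T · Y` of an `n×m` block scalar matrix `T` over `R^{s×s}` with an
`m×m` block matrix over `M^{s×s}`. -/
def bSmulL {M : Type*} [AddCommMonoid M] [Module R M] {s n m : ℕ}
    (T : Matrix (Fin n) (Fin m) (Matrix (Fin s) (Fin s) R))
    (Y : Matrix (Fin m) (Fin m) (Matrix (Fin s) (Fin s) M)) :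
    Matrix (Fin n) (Fin m) (Matrix (Fin s) (Fin s) M) :=
  Matrix.of fun p q => ∑ k, smallRM R (T p k) (Y k q)

end NCNilpCore

/-- The `m`-fold block-diagonal amplification `Y^{(m)}` of `Y ∈ M^{s×s}`, in block form. -/
def diagAmp {V : Type*} [Zero V] {s : ℕ} (Y : Matrix (Fin s) (Fin s) V) (m : ℕ) :
    Matrix (Fin m) (Fin m) (Matrix (Fin s) (Fin s) V) :=
  Matrix.of fun p q => if p = q then Y else 0

/-- The block upper triangular matrix `[[X, Z], [0, X']]`. -/
def upperTri {V : Type*} [Zero V] {a b : ℕ} (X : Matrix (Fin a) (Fin a) V)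
    (Z : Matrix (Fin a) (Fin b) V) (X' : Matrix (Fin b) (Fin b) V) :
    Matrix (Fin (a + b)) (Fin (a + b)) V :=
  Matrix.reindex finSumFinEquiv finSumFinEquiv (Matrix.fromBlocks X Z 0 X')

section NCNilpCore2

variable (R : Type*) [CommRing R]

/-- Map a matrix over a module entrywise into the tensor algebra; products of such
matrices realize the `⊙_s` products with tensor-product entry multiplication. -/
noncomputable def matTA {V : Type*} [AddCommGroup V] [Module R V] {n m : ℕ}
    (X : Matrix (Fin n) (Fin m) V) : Matrix (Fin n) (Fin m) (TensorAlgebra R V) :=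
  X.map (TensorAlgebra.ι R)

/-- `X ∈ Nilp(M, Y0; sm, κ)` : `X` (an `m×m` block matrix over `M^{s×s}`) is nilpotent
about `Y0` of rank at most `κ`, i.e. `(X - Y0^{(m)})^{⊙_s ℓ} = 0` for all `ℓ ≥ κ`. -/
noncomputable def IsNilpAbout {M : Type*} [AddCommGroup M] [Module R M] {s m : ℕ}
    (Y0 : Matrix (Fin s) (Fin s) M) (κ : ℕ)
    (X : Matrix (Fin m) (Fin m) (Matrix (Fin s) (Fin s) M)) : Prop :=
  ∀ ℓ, κ ≤ ℓ → (matTA R (X - diagAmp Y0 m)) ^ ℓ = 0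

/-- The nc set `Nilp(M, X0)` of all matrices (over all levels) nilpotent about `X0`
of some finite rank. -/
noncomputable def NilpSet {M : Type*} [AddCommGroup M] [Module R M] {s : ℕ}
    (X0 : Matrix (Fin s) (Fin s) M) :
    ∀ m : ℕ, Set (Matrix (Fin m) (Fin m) (Matrix (Fin s) (Fin s) M)) :=
  fun _ => {X | ∃ κ, IsNilpAbout R X0 κ X}

/-- The letters (factors) of a word in `X - X0^{(m)}` and `Y - Y0^{(m)}`, with entries in
the tensor algebra of `M^{s×s} × N^{s×s}`. -/
noncomputable def jword {M N : Type*} [AddCommGroup M] [Module R M]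
    [AddCommGroup N] [Module R N] {s m : ℕ}
    (X0 : Matrix (Fin s) (Fin s) M) (Y0 : Matrix (Fin s) (Fin s) N)
    (X : Matrix (Fin m) (Fin m) (Matrix (Fin s) (Fin s) M))
    (Y : Matrix (Fin m) (Fin m) (Matrix (Fin s) (Fin s) N)) :
    Bool → Matrix (Fin m) (Fin m)
      (TensorAlgebra R (Matrix (Fin s) (Fin s) M × Matrix (Fin s) (Fin s) N))
  | true => (X - diagAmp X0 m).map fun a => TensorAlgebra.ι R (a, 0)
  | false => (Y - diagAmp Y0 m).map fun b => TensorAlgebra.ι R (0, b)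

/-- `(X, Y) ∈ Nilp(M × N, (X0, Y0); sm, κ)` : every `⊙_s`-product of `ℓ ≥ κ` factors,
each factor being `X - X0^{(m)}` or `Y - Y0^{(m)}`, vanishes. -/
noncomputable def IsJointNilp {M N : Type*} [AddCommGroup M] [Module R M]
    [AddCommGroup N] [Module R N] {s m : ℕ}
    (X0 : Matrix (Fin s) (Fin s) M) (Y0 : Matrix (Fin s) (Fin s) N) (κ : ℕ)
    (X : Matrix (Fin m) (Fin m) (Matrix (Fin s) (Fin s) M))
    (Y : Matrix (Fin m) (Fin m) (Matrix (Fin s) (Fin s) N)) : Prop :=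
  ∀ ℓ, κ ≤ ℓ → ∀ w : Fin ℓ → Bool,
    (List.ofFn fun i => jword R X0 Y0 X Y (w i)).prod = 0

/-- The nc set `Nilp(M × N, (X0, Y0))` of jointly nilpotent pairs. -/
noncomputable def JointNilpSet {M N : Type*} [AddCommGroup M] [Module R M]
    [AddCommGroup N] [Module R N] {s : ℕ}
    (X0 : Matrix (Fin s) (Fin s) M) (Y0 : Matrix (Fin s) (Fin s) N) :
    ∀ m : ℕ, Set (Matrix (Fin m) (Fin m) (Matrix (Fin s) (Fin s) M) ×
                  Matrix (Fin m) (Fin m) (Matrix (Fin s) (Fin s) N)) :=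
  fun _ => {P | ∃ κ, IsJointNilp R X0 Y0 κ P.1 P.2}

end NCNilpCore2

/-- The right nc difference-differential operator: `Δ_R f (X, X')(Z)` is the `(1,2)`
block of `f([[X, Z],[0, X']])`. -/
def DeltaR {V W : Type*} [Zero V]
    (f : ∀ m : ℕ, Matrix (Fin m) (Fin m) V → Matrix (Fin m) (Fin m) W)
    {a b : ℕ} (X : Matrix (Fin a) (Fin a) V) (X' : Matrix (Fin b) (Fin b) V)
    (Z : Matrix (Fin a) (Fin b) V) : Matrix (Fin a) (Fin b) W :=
  Matrix.of fun i j =>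
    f (a + b) (upperTri X Z X') (finSumFinEquiv (Sum.inl i)) (finSumFinEquiv (Sum.inr j))

/-- `Δ_R F` for a nc function of a pair of arguments. -/
def DeltaRP {V1 V2 W : Type*} [Zero V1] [Zero V2]
    (F : ∀ m : ℕ, Matrix (Fin m) (Fin m) V1 × Matrix (Fin m) (Fin m) V2 →
      Matrix (Fin m) (Fin m) W)
    {a b : ℕ} (P : Matrix (Fin a) (Fin a) V1 × Matrix (Fin a) (Fin a) V2)
    (Q : Matrix (Fin b) (Fin b) V1 × Matrix (Fin b) (Fin b) V2)
    (Z : Matrix (Fin a) (Fin b) V1 × Matrix (Fin a) (Fin b) V2) :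
    Matrix (Fin a) (Fin b) W :=
  Matrix.of fun i j =>
    F (a + b) (upperTri P.1 Z.1 Q.1, upperTri P.2 Z.2 Q.2)
      (finSumFinEquiv (Sum.inl i)) (finSumFinEquiv (Sum.inr j))

/-- The partial nc difference-differential operator in the first argument. -/
def DeltaRPX {V1 V2 W : Type*} [Zero V1] [Zero V2]
    (F : ∀ m : ℕ, Matrix (Fin m) (Fin m) V1 × Matrix (Fin m) (Fin m) V2 →
      Matrix (Fin m) (Fin m) W)
    {a b : ℕ} (P : Matrix (Fin a) (Fin a) V1 × Matrix (Fin a) (Fin a) V2)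
    (Q : Matrix (Fin b) (Fin b) V1 × Matrix (Fin b) (Fin b) V2)
    (Z : Matrix (Fin a) (Fin b) V1) : Matrix (Fin a) (Fin b) W :=
  DeltaRP F P Q (Z, 0)

/-- The partial nc difference-differential operator in the second argument. -/
def DeltaRPY {V1 V2 W : Type*} [Zero V1] [Zero V2]
    (F : ∀ m : ℕ, Matrix (Fin m) (Fin m) V1 × Matrix (Fin m) (Fin m) V2 →
      Matrix (Fin m) (Fin m) W)
    {a b : ℕ} (P : Matrix (Fin a) (Fin a) V1 × Matrix (Fin a) (Fin a) V2)
    (Q : Matrix (Fin b) (Fin b) V1 × Matrix (Fin b) (Fin b) V2)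
    (Z : Matrix (Fin a) (Fin b) V2) : Matrix (Fin a) (Fin b) W :=
  DeltaRP F P Q (0, Z)

section NCFun

variable (R : Type*) [CommRing R]

/-- A nc function on a nc set `Ω` (in block form, base size `s`): it respects
intertwinings by scalar block matrices. -/
def IsNCFunOn {M N : Type*} [AddCommMonoid M] [Module R M] [AddCommMonoid N] [Module R N]
    {s : ℕ} (Ω : ∀ m : ℕ, Set (Matrix (Fin m) (Fin m) (Matrix (Fin s) (Fin s) M)))
    (f : ∀ m : ℕ, Matrix (Fin m) (Fin m) (Matrix (Fin s) (Fin s) M) →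
      Matrix (Fin m) (Fin m) (Matrix (Fin s) (Fin s) N)) : Prop :=
  ∀ (n m : ℕ) (X : Matrix (Fin n) (Fin n) (Matrix (Fin s) (Fin s) M))
    (Y : Matrix (Fin m) (Fin m) (Matrix (Fin s) (Fin s) M))
    (T : Matrix (Fin n) (Fin m) (Matrix (Fin s) (Fin s) R)),
    X ∈ Ω n → Y ∈ Ω m → bSmulR R X T = bSmulL R T Y →
    bSmulR R (f n X) T = bSmulL R T (f m Y)

/-- A nc function of a pair of arguments on a nc set `Ω` of pairs. -/
def IsNCFunOnP {M1 M2 N : Type*} [AddCommMonoid M1] [Module R M1]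
    [AddCommMonoid M2] [Module R M2] [AddCommMonoid N] [Module R N]
    {s : ℕ} (Ω : ∀ m : ℕ, Set (Matrix (Fin m) (Fin m) (Matrix (Fin s) (Fin s) M1) ×
      Matrix (Fin m) (Fin m) (Matrix (Fin s) (Fin s) M2)))
    (F : ∀ m : ℕ, Matrix (Fin m) (Fin m) (Matrix (Fin s) (Fin s) M1) ×
      Matrix (Fin m) (Fin m) (Matrix (Fin s) (Fin s) M2) →
      Matrix (Fin m) (Fin m) (Matrix (Fin s) (Fin s) N)) : Prop :=
  ∀ (n m : ℕ) (P : Matrix (Fin n) (Fin n) (Matrix (Fin s) (Fin s) M1) ×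
      Matrix (Fin n) (Fin n) (Matrix (Fin s) (Fin s) M2))
    (Q : Matrix (Fin m) (Fin m) (Matrix (Fin s) (Fin s) M1) ×
      Matrix (Fin m) (Fin m) (Matrix (Fin s) (Fin s) M2))
    (T : Matrix (Fin n) (Fin m) (Matrix (Fin s) (Fin s) R)),
    P ∈ Ω n → Q ∈ Ω m →
    bSmulR R P.1 T = bSmulL R T Q.1 → bSmulR R P.2 T = bSmulL R T Q.2 →
    bSmulR R (F n P) T = bSmulL R T (F m Q)

end NCFun

/-! Subtracting `Y0^{(n+m)}` keeps `[[X, Z], [0, X']]` block upper triangular, with diagonal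
blocks `X - Y0^{(n)}` and `X' - Y0^{(m)}`. For such a matrix `P = [[A, B], [0, D]]` with
`A ^ κ₁ = 0` and `D ^ κ₂ = 0`, the product `P ^ κ₁ * P ^ κ₂` has the shape
`[[0, *], [0, *]] * [[*, *], [0, 0]] = 0`. -/

namespace Matrix

variable {S : Type*} [Semiring S] {n m : Type*} [Fintype n] [Fintype m]
  [DecidableEq n] [DecidableEq m]

theorem exists_fromBlocks_zero₂₁_pow (A : Matrix n n S) (B : Matrix n m S) (D : Matrix m m S)
    (k : ℕ) : ∃ C, fromBlocks A B 0 D ^ k = fromBlocks (A ^ k) C 0 (D ^ k) := by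
  induction k with
  | zero => exact ⟨0, by simp [fromBlocks_one]⟩
  | succ k ih =>
    obtain ⟨C, hC⟩ := ih
    exact ⟨A ^ k * B + C * D, by simp [pow_succ, hC, fromBlocks_multiply]⟩

theorem fromBlocks_zero₂₁_pow_add_eq_zero {A : Matrix n n S} (B : Matrix n m S)
    {D : Matrix m m S} {k l : ℕ} (hA : A ^ k = 0) (hD : D ^ l = 0) :
    fromBlocks A B 0 D ^ (k + l) = 0 := by
  obtain ⟨C, hC⟩ := exists_fromBlocks_zero₂₁_pow A B D k
  obtain ⟨C', hC'⟩ := exists_fromBlocks_zero₂₁_pow A B D l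
  rw [pow_add, hC, hC', hA, hD, fromBlocks_multiply]
  simp

end Matrix

section UpperTri

variable {V : Type*} {a b : ℕ}

theorem diagAmp_add [Zero V] {s : ℕ} (Y : Matrix (Fin s) (Fin s) V) (n m : ℕ) :
    diagAmp Y (n + m) = upperTri (diagAmp Y n) 0 (diagAmp Y m) := by
  ext i j : 1
  obtain ⟨p, rfl⟩ := finSumFinEquiv.surjective i
  obtain ⟨q, rfl⟩ := finSumFinEquiv.surjective j
  rcases p with p | p <;> rcases q with q | q <;>
    simp [upperTri, diagAmp, Fin.ext_iff] <;> omega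

theorem upperTri_sub_upperTri [AddGroup V] (X A : Matrix (Fin a) (Fin a) V)
    (Z B : Matrix (Fin a) (Fin b) V) (X' D : Matrix (Fin b) (Fin b) V) :
    upperTri X Z X' - upperTri A B D = upperTri (X - A) (Z - B) (X' - D) := by
  ext i j : 1
  obtain ⟨p, rfl⟩ := finSumFinEquiv.surjective i
  obtain ⟨q, rfl⟩ := finSumFinEquiv.surjective j
  rcases p with p | p <;> rcases q with q | q <;> simp [upperTri]

theorem matTA_upperTri (R : Type*) [CommRing R] [AddCommGroup V] [Module R V]
    (X : Matrix (Fin a) (Fin a) V) (Z : Matrix (Fin a) (Fin b) V)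
    (X' : Matrix (Fin b) (Fin b) V) :
    matTA R (upperTri X Z X') = Matrix.reindexAlgEquiv R _ finSumFinEquiv
      (Matrix.fromBlocks (matTA R X) (matTA R Z) 0 (matTA R X')) := by
  simp [matTA, upperTri, Matrix.fromBlocks_map, ← Matrix.submatrix_map]

end UpperTri

theorem isNilpAbout_iff {R : Type*} [CommRing R] {M : Type*} [AddCommGroup M] [Module R M]
    {s m : ℕ} (Y0 : Matrix (Fin s) (Fin s) M) (κ : ℕ)
    (X : Matrix (Fin m) (Fin m) (Matrix (Fin s) (Fin s) M)) :
    IsNilpAbout R Y0 κ X ↔ matTA R (X - diagAmp Y0 m) ^ κ = 0 :=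
  ⟨fun h => h κ le_rfl, fun h _ hℓ => pow_eq_zero_of_le hℓ h⟩

theorem nilpAbout_upperTri_general
    {R : Type*} [CommRing R] {M : Type*} [AddCommGroup M] [Module R M]
    {s : ℕ} (Y0 : Matrix (Fin s) (Fin s) M)
    (n m κ₁ κ₂ : ℕ)
    (X : Matrix (Fin n) (Fin n) (Matrix (Fin s) (Fin s) M))
    (X' : Matrix (Fin m) (Fin m) (Matrix (Fin s) (Fin s) M))
    (Z : Matrix (Fin n) (Fin m) (Matrix (Fin s) (Fin s) M))
    (hX : IsNilpAbout R Y0 κ₁ X) (hX' : IsNilpAbout R Y0 κ₂ X') :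
    IsNilpAbout R Y0 (κ₁ + κ₂) (upperTri X Z X') ∧
    upperTri X Z X' ∈ NilpSet R Y0 (n + m) := by
  rw [isNilpAbout_iff] at hX hX'
  have hnilp : IsNilpAbout R Y0 (κ₁ + κ₂) (upperTri X Z X') := by
    rw [isNilpAbout_iff, diagAmp_add, upperTri_sub_upperTri, sub_zero, matTA_upperTri,
      ← map_pow, Matrix.fromBlocks_zero₂₁_pow_add_eq_zero _ hX hX', map_zero]
  exact ⟨hnilp, κ₁ + κ₂, hnilp⟩

/-- **Nilpotent nc sets are closed under block upper triangular matrices, with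
additive rank bound.** In particular `Nilp(M, Y0)` is a nc set closed under forming
block upper triangular matrices with arbitrary off-diagonal block. -/
theorem nilpAbout_upperTri
    {R : Type*} [CommRing R] {M : Type*} [AddCommGroup M] [Module R M]
    {s : ℕ} (hs : 0 < s) (Y0 : Matrix (Fin s) (Fin s) M)
    (n m κ₁ κ₂ : ℕ) (hn : 0 < n) (hm : 0 < m) (hκ₁ : 1 ≤ κ₁) (hκ₂ : 1 ≤ κ₂)
    (X : Matrix (Fin n) (Fin n) (Matrix (Fin s) (Fin s) M))
    (X' : Matrix (Fin m) (Fin m) (Matrix (Fin s) (Fin s) M))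
    (Z : Matrix (Fin n) (Fin m) (Matrix (Fin s) (Fin s) M))
    (hX : IsNilpAbout R Y0 κ₁ X) (hX' : IsNilpAbout R Y0 κ₂ X') :
    IsNilpAbout R Y0 (κ₁ + κ₂) (upperTri X Z X') ∧
    upperTri X Z X' ∈ NilpSet R Y0 (n + m) :=
  nilpAbout_upperTri_general Y0 n m κ₁ κ₂ X X' Z hX hX'
end
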